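/- arXiv:0712.3908 — 5 statements merged into one kernel-verified Lean document; each statement's English description precedes it below -/
import Mathlib

section
/- Let (X_r) be any sequence with X_r = ±1, Δx > 0, a ∈ ℝ, and S_0 = a, S_n = a + (X_1 + ... + X_n)Δx. For any function f : ℝ → ℝ and any n ≥ 1, the trapezoidal sum of f from S_0 to S_n with step Δx equals the sum over r = 1,...,n of ((f(S_r) + f(S_{r-1}))/2) · X_r · Δx (discrete Stratonovich formula). -/
open scoped Classical
open Finset

noncomputable section

/-- Partial sums `S_n = a + (X_1 + ... + X_n) Δx` of a `±1` sequence. -/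
def walk (a dx : ℝ) (X : ℕ → ℤ) (n : ℕ) : ℝ :=
  a + ((∑ i ∈ Finset.range n, X i : ℤ) : ℝ) * dx

/-- Trapezoidal sum `T_{x=a}^{a + k Δx} f(x) Δx`. -/
def trapSum (f : ℝ → ℝ) (a dx : ℝ) (k : ℤ) : ℝ :=
  (k.sign : ℝ) * dx *
    (f a / 2 +
      (∑ j ∈ Finset.range (k.natAbs - 1), f (a + (k.sign : ℝ) * ((j : ℝ) + 1) * dx)) +
      f (a + (k : ℝ) * dx) / 2)

/-- One-sided (up) discrete local time `L^+(n,x)`. -/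
def locPlus (a dx : ℝ) (X : ℕ → ℤ) (n : ℕ) (x : ℝ) : ℝ :=
  dx * ((Finset.range n).filter
    (fun j => walk a dx X j = x ∧ walk a dx X (j + 1) = x + dx)).card

/-- One-sided (down) discrete local time `L^-(n,x)`. -/
def locMinus (a dx : ℝ) (X : ℕ → ℤ) (n : ℕ) (x : ℝ) : ℝ :=
  dx * ((Finset.range n).filter
    (fun j => walk a dx X j = x ∧ walk a dx X (j + 1) = x - dx)).card

lemma trap_pos (f : ℝ → ℝ) (a dx : ℝ) (m : ℕ) :
    trapSum f a dx ((m : ℤ) + 1) =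
      dx * (f a / 2 + (∑ j ∈ Finset.range m, f (a + ((j : ℝ) + 1) * dx))
        + f (a + ((m : ℝ) + 1) * dx) / 2) := by
  have hs : ((m : ℤ) + 1).sign = 1 := Int.sign_eq_one_of_pos (by positivity)
  have hn : ((m : ℤ) + 1).natAbs = m + 1 := by
    rw [show ((m : ℤ) + 1) = ((m + 1 : ℕ) : ℤ) by push_cast; ring, Int.natAbs_natCast]
  simp only [trapSum, hs, hn, Nat.add_sub_cancel, Int.cast_one, one_mul]
  push_cast
  ring

lemma trap_neg (f : ℝ → ℝ) (a dx : ℝ) (m : ℕ) :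
    trapSum f a dx (-((m : ℤ) + 1)) =
      -dx * (f a / 2 + (∑ j ∈ Finset.range m, f (a - ((j : ℝ) + 1) * dx))
        + f (a - ((m : ℝ) + 1) * dx) / 2) := by
  have hs : (-((m : ℤ) + 1)).sign = -1 := by
    rw [Int.sign_eq_neg_one_iff_neg]; omega
  have hn : (-((m : ℤ) + 1)).natAbs = m + 1 := by
    rw [Int.natAbs_neg, show ((m : ℤ) + 1) = ((m + 1 : ℕ) : ℤ) by push_cast; ring,
      Int.natAbs_natCast]
  simp only [trapSum, hs, hn, Nat.add_sub_cancel, Int.cast_neg, Int.cast_one]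
  simp only [show ∀ j : ℕ, a + -1 * ((j : ℝ) + 1) * dx = a - ((j : ℝ) + 1) * dx from
    fun j => by ring]
  push_cast
  rw [show a + -((m : ℝ) + 1) * dx = a - ((m : ℝ) + 1) * dx from by ring]
  ring

lemma trap_step (f : ℝ → ℝ) (a dx : ℝ) (k : ℤ) :
    trapSum f a dx (k + 1) =
      trapSum f a dx k + (f (a + (k : ℝ) * dx) + f (a + ((k : ℝ) + 1) * dx)) / 2 * dx := by
  rcases le_or_gt 0 k with hk | hk
  · obtain ⟨m, rfl⟩ := Int.eq_ofNat_of_zero_le hk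
    rcases m with _ | m
    · have h1 := trap_pos f a dx 0
      simp only [Nat.cast_zero, zero_add] at h1
      norm_num
      rw [h1]
      simp [trapSum]
      ring
    · have h1 := trap_pos f a dx (m + 1)
      have h2 := trap_pos f a dx m
      push_cast at h1 h2 ⊢
      rw [h1, h2, Finset.sum_range_succ]
      ring
  · obtain ⟨m, rfl⟩ : ∃ m : ℕ, k = -((m : ℤ) + 1) := ⟨(-k - 1).toNat, by omega⟩
    rcases m with _ | m
    · have h2 := trap_neg f a dx 0
      simp only [Nat.cast_zero, zero_add, Finset.range_zero, Finset.sum_empty,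
        add_zero] at h2
      norm_num
      rw [h2]
      simp [trapSum]
      ring
    · have h1 := trap_neg f a dx m
      have h2 := trap_neg f a dx (m + 1)
      rw [show (-(((m + 1 : ℕ) : ℤ) + 1) + 1) = -((m : ℤ) + 1) from by push_cast; ring,
        h1, h2, Finset.sum_range_succ]
      push_cast
      rw [show a + -((m : ℝ) + 1 + 1) * dx = a - ((m : ℝ) + 1 + 1) * dx from by ring,
        show a + (-((m : ℝ) + 1 + 1) + 1) * dx = a - ((m : ℝ) + 1) * dx from by ring]
      ring

/-- Discrete Stratonovich formula. -/
theorem discrete_stratonovich (f : ℝ → ℝ) (a dx : ℝ) (hdx : 0 < dx)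
    (X : ℕ → ℤ) (hX : ∀ r, X r = 1 ∨ X r = -1) (n : ℕ) (hn : 1 ≤ n) :
    trapSum f a dx (∑ i ∈ Finset.range n, X i) =
      ∑ r ∈ Finset.range n,
        (f (walk a dx X (r + 1)) + f (walk a dx X r)) / 2 * ((X r : ℝ) * dx) := by
  clear hn
  induction n with
  | zero => simp [trapSum]
  | succ n ih =>
    rw [Finset.sum_range_succ, Finset.sum_range_succ, ← ih]
    set k : ℤ := ∑ i ∈ Finset.range n, X i with hk
    have hw : walk a dx X n = a + (k : ℝ) * dx := rfl
    have hw' : walk a dx X (n + 1) = a + ((k : ℝ) + (X n : ℝ)) * dx := by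
      simp only [walk, Finset.sum_range_succ, ← hk]
      push_cast
      ring
    rcases hX n with h | h
    · rw [hw, hw', h, trap_step f a dx k]
      push_cast
      ring
    · rw [hw, hw', h]
      have hs := trap_step f a dx (k - 1)
      rw [sub_add_cancel] at hs
      rw [show k + (-1 : ℤ) = k - 1 from by ring, hs]
      push_cast
      ring
end
end

section
/- Let (X_r) be any sequence with X_r = ±1, Δx > 0, a ∈ ℝ, and S_0 = a, S_n = a + (X_1 + ... + X_n)Δx. For any f : ℝ → ℝ and n ≥ 1, the trapezoidal sum of f from S_0 to S_n with step Δx equals Σ_{r=1}^{n} f(S_{r-1}) X_r Δx + (1/2) Σ_{r=1}^{n} ((f(S_r) − f(S_{r-1}))/(X_r Δx)) (Δx)^2 (discrete Itô formula). -/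
open scoped Classical
open Finset

noncomputable section

/-!
Both sides are sums, over the steps of the walk, of the trapezoid areas
`X_r Δx (f(S_r) + f(S_{r+1})) / 2`. For the trapezoidal sum this is because moving the
endpoint `k` by `±1` adds or removes one trapezoid; for the Itô side it is because
`X_r = ±1` gives `Δx² / (X_r Δx) = X_r Δx`.
-/

lemma trapSum_neg (f : ℝ → ℝ) (a dx : ℝ) (k : ℤ) :
    trapSum f a dx (-k) = trapSum f a (-dx) k := by
  simp only [trapSum, Int.sign_neg, Int.natAbs_neg, Int.cast_neg]
  ring_nf

lemma trapSum_natCast_add_one (f : ℝ → ℝ) (a dx : ℝ) (m : ℕ) :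
    trapSum f a dx (m + 1) =
      trapSum f a dx m + dx * (f (a + m * dx) + f (a + (m + 1) * dx)) / 2 := by
  cases m with
  | zero => simp [trapSum]; ring
  | succ m =>
    rw [show ((m + 1 : ℕ) : ℤ) + 1 = ((m + 2 : ℕ) : ℤ) by push_cast; ring]
    simp only [trapSum, Int.sign_natCast_of_ne_zero (Nat.succ_ne_zero _), Int.natAbs_natCast,
      show m + 2 - 1 = m + 1 from rfl, Nat.add_sub_cancel, sum_range_succ]
    push_cast
    ring_nf

lemma trapSum_add_one (f : ℝ → ℝ) (a dx : ℝ) (k : ℤ) :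
    trapSum f a dx (k + 1) =
      trapSum f a dx k + dx * (f (a + k * dx) + f (a + (k + 1) * dx)) / 2 := by
  obtain ⟨m, rfl | rfl⟩ := Int.eq_nat_or_neg k
  · exact_mod_cast trapSum_natCast_add_one f a dx m
  rcases m with _ | m
  · simp [trapSum]; ring
  have h := trapSum_natCast_add_one f a (-dx) m
  rw [← trapSum_neg, ← trapSum_neg] at h
  rw [show -((m + 1 : ℕ) : ℤ) + 1 = -m by push_cast; ring,
    show -((m + 1 : ℕ) : ℤ) = -(m + 1) by push_cast; ring, h]
  push_cast
  ring_nf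

lemma trapSum_add_step (f : ℝ → ℝ) (a dx : ℝ) (k s : ℤ) (hs : s = 1 ∨ s = -1) :
    trapSum f a dx (k + s) =
      trapSum f a dx k + s * dx * (f (a + k * dx) + f (a + (k + s) * dx)) / 2 := by
  rcases hs with rfl | rfl
  · simpa using trapSum_add_one f a dx k
  · have h := trapSum_add_one f a dx (k + -1)
    push_cast at h ⊢
    simp only [neg_add_cancel_right] at h
    linarith

lemma trapSum_walk (f : ℝ → ℝ) (a dx : ℝ) (X : ℕ → ℤ) (hX : ∀ r, X r = 1 ∨ X r = -1)
    (n : ℕ) :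
    trapSum f a dx (∑ i ∈ range n, X i) =
      ∑ r ∈ range n, X r * dx * (f (walk a dx X r) + f (walk a dx X (r + 1))) / 2 := by
  induction n with
  | zero => simp [trapSum]
  | succ n ih =>
    rw [sum_range_succ, trapSum_add_step f a dx _ _ (hX n), ih, sum_range_succ]
    simp only [walk, sum_range_succ, Int.cast_add]

-- Also true for `y = 0`, since `0⁻¹ = 0`.
lemma div_mul_sq_self {K : Type*} [DivisionRing K] (u y : K) : u / y * y ^ 2 = u * y := by
  rw [div_eq_mul_inv, sq, mul_assoc, ← mul_assoc y⁻¹, inv_mul_mul_self]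

lemma left_add_half_div_mul_sq_eq_trapezoid (x y dx : ℝ) (s : ℤ) (hs : s = 1 ∨ s = -1) :
    x * (s * dx) + 1 / 2 * ((y - x) / (s * dx) * dx ^ 2) = s * dx * (x + y) / 2 := by
  have hsq : dx ^ 2 = (s * dx) ^ 2 := by rcases hs with rfl | rfl <;> simp
  rw [hsq, div_mul_sq_self]
  ring

theorem discrete_ito_general (f : ℝ → ℝ) (a dx : ℝ)
    (X : ℕ → ℤ) (hX : ∀ r, X r = 1 ∨ X r = -1) (n : ℕ) :
    trapSum f a dx (∑ i ∈ Finset.range n, X i) =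
      (∑ r ∈ Finset.range n, f (walk a dx X r) * ((X r : ℝ) * dx)) +
      (1 / 2) * ∑ r ∈ Finset.range n,
        (f (walk a dx X (r + 1)) - f (walk a dx X r)) / ((X r : ℝ) * dx) * dx ^ 2 := by
  rw [trapSum_walk f a dx X hX, mul_sum, ← sum_add_distrib]
  exact sum_congr rfl fun r _ =>
    (left_add_half_div_mul_sq_eq_trapezoid _ _ dx (X r) (hX r)).symm

/-- Discrete Itô formula. -/
theorem discrete_ito (f : ℝ → ℝ) (a dx : ℝ) (hdx : 0 < dx)
    (X : ℕ → ℤ) (hX : ∀ r, X r = 1 ∨ X r = -1) (n : ℕ) (hn : 1 ≤ n) :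
    trapSum f a dx (∑ i ∈ Finset.range n, X i) =
      (∑ r ∈ Finset.range n, f (walk a dx X r) * ((X r : ℝ) * dx)) +
      (1 / 2) * ∑ r ∈ Finset.range n,
        (f (walk a dx X (r + 1)) - f (walk a dx X r)) / ((X r : ℝ) * dx) * dx ^ 2 :=
  discrete_ito_general f a dx X hX n
end
end

section
/- Let (X_r) with X_r = ±1, a = 0, Δx > 0, S_0 = 0, S_n = (X_1+...+X_n)Δx. Applying the discrete Itô–Tanaka formula with f(x) = sgn(x − c) for c ∈ ℤΔx gives the discrete Tanaka formula: L(n,c) = |S_n − c| − |S_0 − c| − Σ_{r=1}^{n} sgn(S_{r-1} − c) X_r Δx + E_n, where L(n,c) = L^+(n,c) + L^−(n,c) is the two-sided discrete local time at c and the error term E_n satisfies |E_n| ≤ Δx. -/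
open scoped Classical
open Finset

noncomputable section

lemma card_filter_succ (p : ℕ → Prop) [DecidablePred p] (n : ℕ) :
    ((Finset.range (n+1)).filter p).card
      = ((Finset.range n).filter p).card + (if p n then 1 else 0) := by
  rw [Finset.range_add_one, Finset.filter_insert]
  split
  · rw [Finset.card_insert_of_notMem (by simp)]
  · simp

lemma step_eq (dx : ℝ) (hdx : 0 < dx) (w x : ℤ) (hx : x = 1 ∨ x = -1) :
    (if w = 0 then dx else 0)
      = |((w : ℝ) + (x : ℝ)) * dx| - |(w : ℝ) * dx|
        - Real.sign ((w : ℝ) * dx) * ((x : ℝ) * dx) := by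
  rcases lt_trichotomy w 0 with hw | hw | hw
  · have h1 : (w : ℝ) ≤ -1 := by exact_mod_cast (by omega : w ≤ -1)
    have hs : Real.sign ((w : ℝ) * dx) = -1 :=
      Real.sign_of_neg (mul_neg_of_neg_of_pos (by linarith) hdx)
    rw [if_neg (by omega), hs]
    rcases hx with hx | hx <;> subst hx <;> push_cast <;>
      rw [abs_of_nonpos (by nlinarith), abs_of_nonpos (by nlinarith)] <;> ring
  · subst hw
    simp [abs_of_pos hdx, abs_of_pos, hdx.le]
    rcases hx with hx | hx <;> subst hx <;> push_cast <;>
      simp [abs_of_pos hdx]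
  · have h1 : (1 : ℝ) ≤ (w : ℝ) := by exact_mod_cast (by omega : (1:ℤ) ≤ w)
    have hs : Real.sign ((w : ℝ) * dx) = 1 :=
      Real.sign_of_pos (mul_pos (by linarith) hdx)
    rw [if_neg (by omega), hs]
    rcases hx with hx | hx <;> subst hx <;> push_cast <;>
      rw [abs_of_nonneg (by nlinarith), abs_of_nonneg (by nlinarith)] <;> ring

lemma tanaka_exact (dx : ℝ) (hdx : 0 < dx) (X : ℕ → ℤ)
    (hX : ∀ r, X r = 1 ∨ X r = -1) (c' : ℤ) : ∀ n : ℕ,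
    locPlus 0 dx X n ((c' : ℝ) * dx) + locMinus 0 dx X n ((c' : ℝ) * dx) =
      |walk 0 dx X n - (c' : ℝ) * dx| - |walk 0 dx X 0 - (c' : ℝ) * dx| -
        (∑ r ∈ Finset.range n,
          Real.sign (walk 0 dx X r - (c' : ℝ) * dx) * ((X r : ℝ) * dx)) := by
  intro n
  induction n with
  | zero => simp [locPlus, locMinus]
  | succ n ih =>
    have hwalk : ∀ m : ℕ, walk 0 dx X m - (c' : ℝ) * dx
        = (((∑ i ∈ Finset.range m, X i) - c' : ℤ) : ℝ) * dx := by
      intro m; simp [walk]; push_cast; ring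
    set w : ℤ := (∑ i ∈ Finset.range n, X i) - c' with hwdef
    have hw1 : walk 0 dx X (n+1) - (c' : ℝ) * dx = ((w : ℝ) + (X n : ℝ)) * dx := by
      rw [hwalk (n+1), hwdef]
      push_cast [Finset.sum_range_succ]; ring
    have hw0 : walk 0 dx X n - (c' : ℝ) * dx = (w : ℝ) * dx := hwalk n
    -- unfold the local times at n+1
    rw [locPlus, locMinus, card_filter_succ, card_filter_succ,
      Finset.sum_range_succ]
    push_cast
    have key : dx * (if (walk 0 dx X n = (c' : ℝ) * dx ∧
            walk 0 dx X (n+1) = (c' : ℝ) * dx + dx) then (1:ℝ) else 0)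
        + dx * (if (walk 0 dx X n = (c' : ℝ) * dx ∧
            walk 0 dx X (n+1) = (c' : ℝ) * dx - dx) then (1:ℝ) else 0)
        = (if w = 0 then dx else 0) := by
      have hwn : (walk 0 dx X n = (c' : ℝ) * dx) ↔ w = 0 := by
        rw [← sub_eq_zero, hw0]
        constructor
        · intro h
          have := mul_eq_zero.mp h
          rcases this with h | h
          · exact_mod_cast h
          · exact absurd h (ne_of_gt hdx)
        · intro h; rw [h]; simp
      rcases hX n with hx | hx
      · have h2 : walk 0 dx X (n+1) = (c' : ℝ) * dx + ((w : ℝ) + 1) * dx := by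
          rw [← sub_eq_iff_eq_add', hw1, hx]; push_cast; ring
        by_cases hw : w = 0
        · rw [if_pos ⟨hwn.mpr hw, by rw [h2, hw]; push_cast; ring⟩,
            if_neg, if_pos hw]
          · ring
          · rintro ⟨-, h⟩
            rw [h2, hw] at h
            push_cast at h
            nlinarith
        · rw [if_neg, if_neg, if_neg hw]
          · ring
          · rintro ⟨h, -⟩; exact hw (hwn.mp h)
          · rintro ⟨h, -⟩; exact hw (hwn.mp h)
      · have h2 : walk 0 dx X (n+1) = (c' : ℝ) * dx + ((w : ℝ) - 1) * dx := by
          rw [← sub_eq_iff_eq_add', hw1, hx]; push_cast; ring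
        by_cases hw : w = 0
        · rw [if_neg, if_pos ⟨hwn.mpr hw, by rw [h2, hw]; push_cast; ring⟩,
            if_pos hw]
          · ring
          · rintro ⟨-, h⟩
            rw [h2, hw] at h
            push_cast at h
            nlinarith
        · rw [if_neg, if_neg, if_neg hw]
          · ring
          · rintro ⟨h, -⟩; exact hw (hwn.mp h)
          · rintro ⟨h, -⟩; exact hw (hwn.mp h)
    have step := step_eq dx hdx w (X n) (hX n)
    rw [hw1, hw0]
    rw [locPlus, locMinus] at ih
    rw [hw0] at ih
    -- now combine
    nlinarith [key, step, ih]

/-- Discrete Tanaka formula: the two-sided discrete local time at a lattice point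
`c = c' Δx` equals `|S_n - c| - |S_0 - c| - Σ sgn(S_{r-1} - c) X_r Δx` up to an
additive error of absolute value at most `Δx`. -/
theorem discrete_tanaka (dx : ℝ) (hdx : 0 < dx)
    (X : ℕ → ℤ) (hX : ∀ r, X r = 1 ∨ X r = -1) (n : ℕ) (hn : 1 ≤ n) (c' : ℤ) :
    ∃ E : ℝ, |E| ≤ dx ∧
      locPlus 0 dx X n ((c' : ℝ) * dx) + locMinus 0 dx X n ((c' : ℝ) * dx) =
        |walk 0 dx X n - (c' : ℝ) * dx| - |walk 0 dx X 0 - (c' : ℝ) * dx| -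
          (∑ r ∈ Finset.range n,
            Real.sign (walk 0 dx X r - (c' : ℝ) * dx) * ((X r : ℝ) * dx)) + E := by
  refine ⟨0, by simpa using hdx.le, ?_⟩
  rw [add_zero]
  exact tanaka_exact dx hdx X hX c' n
end
end

section
/- Let W be standard Brownian motion with natural filtration (F_t), let K > 0, and let Y be a left-continuous adapted process with ‖Y‖²_K := ∫_0^K E[Y(t)²] dt < ∞. For b > 0 let Y^b be Y truncated to [−b, b], and for m ≥ 0 let Y^b_m(t) := Y^b(0)·1_{{0}}(t) + Σ_{r≥1} Y^b(s_m(r−1)) 1_{(s_m(r−1), s_m(r)]}(t), with s_m the Skorohod stopping times of step 2^{−m}. Then there exists a sequence m(b) → ∞ such that ‖Y − Y^b_{m(b)}‖_K → 0 as b → ∞. -/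
/-!
Write `Y - Y^b_m = (Y - Y^b) + (Y^b - Y^b_m)`. The first part tends to `0` as `b → ∞` by
dominated convergence, with `Y²` as dominating function.

For fixed `b`, almost every Brownian path is unbounded and constant on no interval. On such a
path the Skorohod times are finite and increase to `∞`, and the step `(s_m(r), s_m(r+1)]`
containing a given `t > 0` closes in on `t` from the left as `m → ∞`: within one step the path
moves by less than `2^{-m}`. Left continuity then gives `Y^b_m(t) → Y^b(t)`, and bounded
convergence gives `‖Y^b - Y^b_m‖_K → 0`. A diagonal choice of `m(b)` combines the two limits.

The sampled processes are not known to be measurable, so dominated convergence is applied to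
measurable minorants with the same lower Lebesgue integrals.
-/

open scoped Classical ENNReal NNReal
open MeasureTheory ProbabilityTheory Filter Set

noncomputable section

/-- `W` is a standard Brownian motion on `(Ω, P)`: starts at `0`, has continuous
paths, Gaussian increments `W_t - W_s ~ N(0, t-s)`, and independent increments. -/
def IsStandardBM {Ω : Type} [MeasurableSpace Ω] (P : Measure Ω) (W : ℝ → Ω → ℝ) : Prop :=
  (∀ t : ℝ, StronglyMeasurable (W t)) ∧
  (∀ ω, W 0 ω = 0) ∧
  (∀ ω, Continuous fun t => W t ω) ∧
  (∀ s t : ℝ, 0 ≤ s → s ≤ t →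
    P.map (fun ω => W t ω - W s ω) = gaussianReal 0 (Real.toNNReal (t - s))) ∧
  (∀ n : ℕ, ∀ u : ℕ → ℝ, Monotone u → u 0 = 0 → (∀ i, 0 ≤ u i) →
    iIndepFun
      (fun (i : Fin n) ω => W (u (i + 1)) ω - W (u i) ω) P)

/-- Pathwise Skorohod stopping times with step `2^{-m}`:
`s_m(0)=0`, `s_m(k+1) = inf{s > s_m(k) : |W(s) - W(s_m(k))| = 2^{-m}}`. -/
def skTime (Wp : ℝ → ℝ) (m : ℕ) : ℕ → ℝ
  | 0 => 0
  | k + 1 => sInf {s : ℝ | skTime Wp m k < s ∧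
      |Wp s - Wp (skTime Wp m k)| = (2 : ℝ) ^ (-(m : ℤ))}

/-- The Skorohod-embedded walk `B_m`, with `B_m(k 2^{-2m}) = W(s_m(k))`, extended
to real `t ≥ 0` by linear interpolation. -/
def embWalk (Wp : ℝ → ℝ) (m : ℕ) (t : ℝ) : ℝ :=
  (1 - (t * 2 ^ (2 * m) - (⌊t * 2 ^ (2 * m)⌋₊ : ℝ))) * Wp (skTime Wp m ⌊t * 2 ^ (2 * m)⌋₊) +
    (t * 2 ^ (2 * m) - (⌊t * 2 ^ (2 * m)⌋₊ : ℝ)) * Wp (skTime Wp m (⌊t * 2 ^ (2 * m)⌋₊ + 1))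

/-- Pathwise Itô sum `(f(W)·W)^m_t`. -/
def itoSum (Wp : ℝ → ℝ) (f : ℝ → ℝ) (m : ℕ) (t : ℝ) : ℝ :=
  ∑ r ∈ Finset.range ⌊t * 2 ^ (2 * m)⌋₊,
    f (Wp (skTime Wp m r)) * (Wp (skTime Wp m (r + 1)) - Wp (skTime Wp m r))

/-- Pathwise Stratonovich sum `(f(W)∘W)^m_t`. -/
def stratSum (Wp : ℝ → ℝ) (f : ℝ → ℝ) (m : ℕ) (t : ℝ) : ℝ :=
  ∑ r ∈ Finset.range ⌊t * 2 ^ (2 * m)⌋₊,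
    (f (Wp (skTime Wp m r)) + f (Wp (skTime Wp m (r + 1)))) / 2 *
      (Wp (skTime Wp m (r + 1)) - Wp (skTime Wp m r))

/-- Truncation of `y` to the interval `[-b, b]`. -/
def trunc (b y : ℝ) : ℝ := max (-b) (min b y)

/-- The simple process obtained by sampling a path `Yp` at the Skorohod stopping
times of the Brownian path `Wp`:
`Y^b_m(t) = Y^b(0) 1_{{0}}(t) + Σ_{r≥1} Y^b(s_m(r-1)) 1_{(s_m(r-1), s_m(r)]}(t)`. -/
def sampled (Wp Yp : ℝ → ℝ) (m : ℕ) (t : ℝ) : ℝ :=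
  if t = 0 then Yp 0
  else ∑' r : ℕ,
    Set.indicator (Set.Ioc (skTime Wp m r) (skTime Wp m (r + 1)))
      (fun _ => Yp (skTime Wp m r)) t

/-- Left continuity of a process. -/
def LeftContinuousPaths {Ω : Type} (Y : ℝ → Ω → ℝ) : Prop :=
  ∀ ω, ∀ t : ℝ, Tendsto (fun s => Y s ω) (nhdsWithin t (Set.Iio t)) (nhds (Y t ω))

open scoped Topology


theorem Filter.exists_tendsto_atTop_diagonal {α : Type*} {l : Filter α} [l.IsCountablyGenerated]
    {f : ℕ → ℕ → α} (hf : ∀ b, Tendsto (f b) atTop l) :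
    ∃ φ : ℕ → ℕ, Tendsto φ atTop atTop ∧ Tendsto (fun b => f b (φ b)) atTop l := by
  obtain ⟨U, hU⟩ := l.exists_antitone_basis
  choose M hM using fun b => eventually_atTop.1 ((hf b).eventually (hU.mem b))
  exact ⟨fun b => max b (M b), tendsto_atTop_mono (fun b => le_max_left _ _) tendsto_id,
    hU.tendsto fun b => hM b _ (le_max_right _ _)⟩

theorem MeasureTheory.tendsto_lintegral_zero_of_dominated {α : Type*} [MeasurableSpace α]
    {μ : Measure α} {f : ℕ → α → ℝ≥0∞} (D : α → ℝ≥0∞) (hD : ∫⁻ a, D a ∂μ ≠ ∞)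
    (hfD : ∀ n, f n ≤ᵐ[μ] D) (hf : ∀ᵐ a ∂μ, Tendsto (fun n => f n a) atTop (𝓝 0)) :
    Tendsto (fun n => ∫⁻ a, f n a ∂μ) atTop (𝓝 0) := by
  -- `f n` need not be measurable: pass to measurable minorants with the same integral
  choose g hg_meas hgf hg_eq using fun n => exists_measurable_le_lintegral_eq μ (f n)
  have hg : ∀ᵐ a ∂μ, Tendsto (fun n => g n a) atTop (𝓝 0) := hf.mono fun a ha =>
    tendsto_of_tendsto_of_tendsto_of_le_of_le tendsto_const_nhds ha (fun _ => zero_le)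
      fun n => hgf n a
  simpa only [hg_eq, lintegral_zero] using tendsto_lintegral_of_dominated_convergence D hg_meas
    (fun n => (hfD n).mono fun a ha => (hgf n a).trans ha) hD hg

theorem tendsto_ceil_sub_one_div_nhdsLT (t : ℝ) :
    Tendsto (fun n : ℕ => ((⌈t * (n + 1)⌉ : ℝ) - 1) / (n + 1)) atTop (𝓝[<] t) := by
  have hlt : ∀ n : ℕ, ((⌈t * (n + 1)⌉ : ℝ) - 1) / (n + 1) < t := fun n => by
    rw [div_lt_iff₀ (by positivity)]
    linarith [Int.ceil_lt_add_one (t * (n + 1))]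
  have hge : ∀ n : ℕ, t - 1 / (n + 1) ≤ ((⌈t * (n + 1)⌉ : ℝ) - 1) / (n + 1) := fun n => by
    rw [sub_div' (by positivity), div_le_div_iff_of_pos_right (by positivity)]
    linarith [Int.le_ceil (t * (n + 1))]
  have hlim : Tendsto (fun n : ℕ => t - 1 / ((n : ℝ) + 1)) atTop (𝓝 t) := by
    simpa using tendsto_const_nhds.sub (tendsto_one_div_add_atTop_nhds_zero_nat (𝕜 := ℝ))
  exact tendsto_nhdsWithin_of_tendsto_nhds_of_eventually_within _
    (tendsto_of_tendsto_of_tendsto_of_le_of_le hlim tendsto_const_nhds hge fun n => (hlt n).le)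
    (Eventually.of_forall hlt)

theorem measurable_uncurry_of_tendsto_nhdsLT {Ω β : Type*} [MeasurableSpace Ω]
    [TopologicalSpace β] [TopologicalSpace.PseudoMetrizableSpace β] [MeasurableSpace β]
    [BorelSpace β]
    {Y : ℝ → Ω → β} (hY : ∀ t, Measurable (Y t))
    (hleft : ∀ ω t, Tendsto (fun s => Y s ω) (𝓝[<] t) (𝓝 (Y t ω))) :
    Measurable fun p : ℝ × Ω => Y p.1 p.2 := by
  -- sample `Y` on the grid `(k - 1)/(n + 1)`, approaching each time from the left
  have hgrid : ∀ n : ℕ, Measurable fun p : ℝ × Ω =>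
      Y (((⌈p.1 * (n + 1)⌉ : ℝ) - 1) / (n + 1)) p.2 := fun n => by
    have hslice : Measurable fun q : Ω × ℤ => Y (((q.2 : ℝ) - 1) / (n + 1)) q.1 :=
      measurable_from_prod_countable_left fun k => hY (((k : ℝ) - 1) / (n + 1))
    exact hslice.comp (measurable_snd.prodMk (Int.measurable_ceil.comp
      (measurable_fst.mul_const _)))
  exact measurable_of_tendsto_metrizable hgrid
    (tendsto_pi_nhds.2 fun p => (hleft p.2 p.1).comp (tendsto_ceil_sub_one_div_nhdsLT p.1))

theorem exists_mem_Ioc_succ {α : Type*} [LinearOrder α] {f : ℕ → α} {t : α} (h0 : f 0 < t)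
    (h : ∃ k, t ≤ f k) : ∃ r, t ∈ Ioc (f r) (f (r + 1)) := by
  obtain ⟨r, hr⟩ := Nat.exists_eq_succ_of_ne_zero fun hk : Nat.find h = 0 =>
    h0.not_ge (hk ▸ Nat.find_spec h)
  refine ⟨r, not_le.1 (Nat.find_min h (by omega)), ?_⟩
  simpa only [hr] using Nat.find_spec h

theorem tsum_indicator_Ioc_succ_eq {α β : Type*} [LinearOrder α] [AddCommMonoid β]
    [TopologicalSpace β] {f : ℕ → α} (hf : Monotone f) (g : ℕ → β) {r : ℕ} {t : α}
    (ht : t ∈ Ioc (f r) (f (r + 1))) :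
    ∑' k, (Ioc (f k) (f (k + 1))).indicator (fun _ => g k) t = g r := by
  refine (tsum_eq_single r fun k hk => indicator_of_notMem (fun hkt => hk ?_) _).trans
    (indicator_of_mem ht _)
  have h1 : ¬ r + 1 ≤ k := fun h => (ht.2.trans (hf h)).not_gt hkt.1
  have h2 : ¬ k + 1 ≤ r := fun h => (hkt.2.trans (hf h)).not_gt ht.1
  omega

def firstExit (w : ℝ → ℝ) (x c : ℝ) : ℝ := sInf {s | x < s ∧ |w s - w x| = c}

section FirstExit

variable {w : ℝ → ℝ} {x c : ℝ}

theorem exists_mem_Ioc_abs_sub_eq (hw : Continuous w) (hc : 0 < c) {q : ℝ} (hxq : x ≤ q)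
    (hq : c ≤ |w q - w x|) : ∃ s ∈ Ioc x q, |w s - w x| = c := by
  obtain ⟨s, hs, hsc⟩ := intermediate_value_Icc hxq
    (show ContinuousOn (fun s => |w s - w x|) (Icc x q) by fun_prop) ⟨by simpa using hc.le, hq⟩
  refine ⟨s, ⟨hs.1.lt_of_ne ?_, hs.2⟩, hsc⟩
  rintro rfl
  simp only [sub_self, abs_zero] at hsc
  exact hc.ne hsc

theorem firstExit_spec (hw : Continuous w) (hunb : ∀ c : ℝ, ∃ᶠ s in atTop, c < |w s|)
    (hc : 0 < c) :
    x < firstExit w x c ∧ |w (firstExit w x c) - w x| = c ∧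
      ∀ s ∈ Ico x (firstExit w x c), |w s - w x| < c := by
  have hne : {s | x < s ∧ |w s - w x| = c}.Nonempty := by
    obtain ⟨q, hq, hxq⟩ := ((hunb (|w x| + c)).and_eventually (eventually_ge_atTop x)).exists
    obtain ⟨s, hs, hsc⟩ := exists_mem_Ioc_abs_sub_eq hw hc hxq
      (by linarith [abs_sub_abs_le_abs_sub (w q) (w x)])
    exact ⟨s, hs.1, hsc⟩
  have hbdd : BddBelow {s | x < s ∧ |w s - w x| = c} := ⟨x, fun s hs => hs.1.le⟩
  have hclosed : IsClosed {s | x ≤ s ∧ |w s - w x| = c} :=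
    (isClosed_le continuous_const continuous_id).inter
      (isClosed_eq (hw.sub continuous_const).abs continuous_const)
  have hmem : firstExit w x c ∈ {s | x ≤ s ∧ |w s - w x| = c} := by
    refine closure_minimal ?_ hclosed (csInf_mem_closure hne hbdd)
    exact fun s hs => ⟨hs.1.le, hs.2⟩
  have hlt : x < firstExit w x c := hmem.1.lt_of_ne fun h => by
    have hc' := hmem.2
    rw [← h, sub_self, abs_zero] at hc'
    exact hc.ne hc'
  refine ⟨hlt, hmem.2, fun s hs => not_le.1 fun hcs => ?_⟩
  obtain ⟨s', hs', hs'c⟩ := exists_mem_Ioc_abs_sub_eq hw hc hs.1 hcs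
  exact (csInf_le hbdd ⟨hs'.1, hs'c⟩).not_gt (hs'.2.trans_lt hs.2)

end FirstExit

section SkorohodTimes

variable {w : ℝ → ℝ}

theorem skTime_succ_spec (hw : Continuous w) (hunb : ∀ c : ℝ, ∃ᶠ s in atTop, c < |w s|)
    (m k : ℕ) :
    skTime w m k < skTime w m (k + 1) ∧
      |w (skTime w m (k + 1)) - w (skTime w m k)| = 2 ^ (-(m : ℤ)) ∧
      ∀ s ∈ Ico (skTime w m k) (skTime w m (k + 1)),
        |w s - w (skTime w m k)| < 2 ^ (-(m : ℤ)) :=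
  firstExit_spec hw hunb (zpow_pos two_pos _)

theorem skTime_strictMono (hw : Continuous w) (hunb : ∀ c : ℝ, ∃ᶠ s in atTop, c < |w s|)
    (m : ℕ) : StrictMono (skTime w m) :=
  strictMono_nat_of_lt_succ fun k => (skTime_succ_spec hw hunb m k).1

theorem tendsto_skTime_atTop (hw : Continuous w) (hunb : ∀ c : ℝ, ∃ᶠ s in atTop, c < |w s|)
    (m : ℕ) : Tendsto (skTime w m) atTop atTop := by
  rcases tendsto_atTop_of_monotone (skTime_strictMono hw hunb m).monotone with h | ⟨l, hl⟩
  · exact h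
  -- a finite limit would force the increments `2 ^ (-m)` of `w` along the times to vanish
  have hwl := (hw.tendsto l).comp hl
  have hincr := ((hwl.comp (tendsto_add_atTop_nat 1)).sub hwl).abs
  simp only [Function.comp_def, (skTime_succ_spec hw hunb m _).2.1, sub_self, abs_zero] at hincr
  exact absurd (tendsto_nhds_unique tendsto_const_nhds hincr) (zpow_pos two_pos _).ne'

theorem exists_sampled_eq (hw : Continuous w) (hunb : ∀ c : ℝ, ∃ᶠ s in atTop, c < |w s|)
    (y : ℝ → ℝ) (m : ℕ) {t : ℝ} (ht : 0 < t) :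
    ∃ r, t ∈ Ioc (skTime w m r) (skTime w m (r + 1)) ∧ sampled w y m t = y (skTime w m r) := by
  obtain ⟨r, hr⟩ := exists_mem_Ioc_succ (f := skTime w m) ht
    ((tendsto_skTime_atTop hw hunb m).eventually_ge_atTop t).exists
  rw [sampled, if_neg ht.ne', tsum_indicator_Ioc_succ_eq (skTime_strictMono hw hunb m).monotone
    (fun r => y (skTime w m r)) hr]
  exact ⟨r, hr, rfl⟩

theorem abs_sampled_le (hw : Continuous w) (hunb : ∀ c : ℝ, ∃ᶠ s in atTop, c < |w s|)
    {y : ℝ → ℝ} {b : ℝ} (hy : ∀ s, |y s| ≤ b) (m : ℕ) {t : ℝ} (ht : 0 < t) :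
    |sampled w y m t| ≤ b := by
  obtain ⟨r, -, h⟩ := exists_sampled_eq hw hunb y m ht
  exact h ▸ hy _

theorem tendsto_skTime_nhdsLT (hw : Continuous w) (hunb : ∀ c : ℝ, ∃ᶠ s in atTop, c < |w s|)
    (hnc : ∀ a b, 0 ≤ a → a < b → ∃ s ∈ Ioo a b, w s ≠ w a) {t : ℝ} (ht : 0 < t)
    {r : ℕ → ℕ} (hr : ∀ m, t ∈ Ioc (skTime w m (r m)) (skTime w m (r m + 1))) :
    Tendsto (fun m => skTime w m (r m)) atTop (𝓝[<] t) := by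
  refine tendsto_nhdsWithin_of_tendsto_nhds_of_eventually_within _
    (tendsto_order.2 ⟨fun a ha => ?_, fun a ha => .of_forall fun m => (hr m).1.trans ha⟩)
    (.of_forall fun m => (hr m).1)
  obtain ⟨s, hs, hws⟩ := hnc (max a 0) t (le_max_right a 0) (max_lt ha ht)
  have hstep : Tendsto (fun m : ℕ => 2 * (2 : ℝ) ^ (-(m : ℤ))) atTop (𝓝 0) := by
    simpa [zpow_neg, zpow_natCast] using (tendsto_inv_atTop_zero.comp
      (tendsto_pow_atTop_atTop_of_one_lt (one_lt_two (α := ℝ)))).const_mul 2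
  filter_upwards [hstep.eventually_lt_const (abs_pos.2 (sub_ne_zero.2 hws))] with m hm
  refine (le_max_left a 0).trans_lt (not_le.1 fun hle => ?_)
  -- otherwise `max a 0` and `s` lie in one step, where `w` stays within `2 ^ (-m)` of its start
  have hstay := (skTime_succ_spec hw hunb m (r m)).2.2
  have h1 := hstay _ ⟨hle, (hs.1.trans hs.2).trans_le (hr m).2⟩
  have h2 := hstay s ⟨hle.trans hs.1.le, hs.2.trans_le (hr m).2⟩
  have := abs_sub_le (w s) (w (skTime w m (r m))) (w (max a 0))
  rw [abs_sub_comm (w (skTime w m (r m)))] at this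
  linarith

theorem tendsto_sampled (hw : Continuous w) (hunb : ∀ c : ℝ, ∃ᶠ s in atTop, c < |w s|)
    (hnc : ∀ a b, 0 ≤ a → a < b → ∃ s ∈ Ioo a b, w s ≠ w a) {y : ℝ → ℝ} {t : ℝ} (ht : 0 < t)
    (hy : Tendsto y (𝓝[<] t) (𝓝 (y t))) :
    Tendsto (fun m => sampled w y m t) atTop (𝓝 (y t)) := by
  choose r hr hsampled using fun m => exists_sampled_eq hw hunb y m ht
  exact (tendsto_congr hsampled).2 (hy.comp (tendsto_skTime_nhdsLT hw hunb hnc ht hr))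

end SkorohodTimes

section Gaussian

open Real

theorem gaussianPDFReal_le (μ : ℝ) (v : ℝ≥0) (x : ℝ) :
    gaussianPDFReal μ v x ≤ (√(2 * π * v))⁻¹ :=
  mul_le_of_le_one_right (by positivity) (Real.exp_le_one_iff.2
    (div_nonpos_of_nonpos_of_nonneg (neg_nonpos.2 (sq_nonneg _)) (by positivity)))

theorem gaussianReal_le_mul_volume (μ : ℝ) {v : ℝ≥0} (hv : v ≠ 0) (s : Set ℝ) :
    gaussianReal μ v s ≤ ENNReal.ofReal (√(2 * π * v))⁻¹ * volume s := by
  rw [gaussianReal_apply μ hv, ← setLIntegral_const]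
  exact lintegral_mono fun x => ENNReal.ofReal_le_ofReal (gaussianPDFReal_le μ v x)

theorem tendsto_gaussianReal_atTop (μ : ℝ) {s : Set ℝ} (hs : volume s ≠ ∞) :
    Tendsto (fun v : ℝ≥0 => gaussianReal μ v s) atTop (𝓝 0) := by
  have hdens : Tendsto (fun v : ℝ≥0 => (√(2 * π * v))⁻¹) atTop (𝓝 0) :=
    tendsto_inv_atTop_zero.comp (tendsto_sqrt_atTop.comp
      (NNReal.tendsto_coe_atTop.2 tendsto_id |>.const_mul_atTop (by positivity)))
  have hbound := ENNReal.Tendsto.mul_const (ENNReal.tendsto_ofReal hdens) (Or.inr hs)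
  rw [ENNReal.ofReal_zero, zero_mul] at hbound
  exact tendsto_of_tendsto_of_tendsto_of_le_of_le' tendsto_const_nhds hbound
    (.of_forall fun _ => zero_le) ((eventually_ne_atTop 0).mono fun v hv =>
      gaussianReal_le_mul_volume μ hv s)

end Gaussian

namespace IsStandardBM

variable {Ω : Type} [MeasurableSpace Ω] {P : Measure Ω} {W : ℝ → Ω → ℝ}

theorem map_eq (hW : IsStandardBM P W) {t : ℝ} (ht : 0 ≤ t) :
    P.map (W t) = gaussianReal 0 (Real.toNNReal t) := by
  simpa [hW.2.1] using hW.2.2.2.1 0 t le_rfl ht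

theorem ae_ne (hW : IsStandardBM P W) {s t : ℝ} (hs : 0 ≤ s) (hst : s < t) :
    ∀ᵐ ω ∂P, W t ω ≠ W s ω := by
  have hmeas : Measurable fun ω => W t ω - W s ω := (hW.1 t).measurable.sub (hW.1 s).measurable
  have := nullSingletonClass_gaussianReal (μ := 0) (v := Real.toNNReal (t - s))
    (by simpa using hst)
  have hnull : P.map (fun ω => W t ω - W s ω) {0} = 0 := by
    rw [hW.2.2.2.1 s t hs hst.le]
    exact measure_singleton 0
  rw [Measure.map_apply hmeas (measurableSet_singleton 0)] at hnull
  rw [ae_iff]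
  exact measure_mono_null (fun ω h => by simpa [sub_eq_zero] using h) hnull

theorem ae_forall_exists_ne (hW : IsStandardBM P W) :
    ∀ᵐ ω ∂P, ∀ a b, 0 ≤ a → a < b → ∃ s ∈ Ioo a b, W s ω ≠ W a ω := by
  have hrat : ∀ᵐ ω ∂P, ∀ q₁ q₂ : ℚ, 0 ≤ (q₁ : ℝ) → (q₁ : ℝ) < q₂ → W q₂ ω ≠ W q₁ ω :=
    ae_all_iff.2 fun _ => ae_all_iff.2 fun _ => eventually_imp_distrib_left.2 fun h₁ =>
      eventually_imp_distrib_left.2 fun h₁₂ => hW.ae_ne h₁ h₁₂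
  filter_upwards [hrat] with ω hω a b ha hab
  obtain ⟨q₁, ha₁, h₁b⟩ := exists_rat_btwn hab
  obtain ⟨q₂, h₁₂, h₂b⟩ := exists_rat_btwn h₁b
  by_contra! h
  exact hω q₁ q₂ (ha.trans ha₁.le) h₁₂
    ((h q₂ ⟨ha₁.trans h₁₂, h₂b⟩).trans (h q₁ ⟨ha₁, h₁₂.trans h₂b⟩).symm)

theorem ae_frequently_lt_abs (hW : IsStandardBM P W) :
    ∀ᵐ ω ∂P, ∀ c : ℝ, ∃ᶠ t in atTop, c < |W t ω| := by
  suffices h : ∀ k N : ℕ, ∀ᵐ ω ∂P, ∃ n ≥ N, (k : ℝ) < |W n ω| by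
    filter_upwards [ae_all_iff.2 fun k => ae_all_iff.2 (h k)] with ω hω c
    refine frequently_atTop.2 fun a => ?_
    obtain ⟨n, hn, hlt⟩ := hω ⌈c⌉₊ ⌈a⌉₊
    exact ⟨n, (Nat.le_ceil a).trans (by exact_mod_cast hn), (Nat.le_ceil c).trans_lt hlt⟩
  intro k N
  -- staying in `[-k, k]` at all integer times `n ≥ N` is no likelier than at any single one
  have hle : ∀ n ≥ N, P {ω | ¬ ∃ n ≥ N, (k : ℝ) < |W n ω|} ≤
      gaussianReal 0 (Real.toNNReal n) (Icc (-k) k) := fun n hn => by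
    rw [← hW.map_eq (Nat.cast_nonneg n), Measure.map_apply (hW.1 n).measurable measurableSet_Icc]
    exact measure_mono fun ω hω => abs_le.1 (not_lt.1 fun h => hω ⟨n, hn, h⟩)
  have hlim : Tendsto (fun n : ℕ => gaussianReal 0 (Real.toNNReal n) (Icc (-k) k)) atTop (𝓝 0) :=
    (tendsto_gaussianReal_atTop 0 (by simp)).comp
      (tendsto_real_toNNReal_atTop.comp tendsto_natCast_atTop_atTop)
  exact ae_iff.2 (le_antisymm (ge_of_tendsto hlim (eventually_atTop.2 ⟨N, hle⟩)) zero_le)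

end IsStandardBM

section Truncation

variable {b : ℝ}

theorem trunc_of_abs_le {y : ℝ} (h : |y| ≤ b) : trunc b y = y := by
  rw [trunc, min_eq_right (abs_le.1 h).2, max_eq_right (abs_le.1 h).1]

theorem abs_trunc_le (hb : 0 ≤ b) (y : ℝ) : |trunc b y| ≤ b :=
  abs_le.2 ⟨le_max_left _ _, max_le (by linarith) (min_le_left _ _)⟩

theorem abs_sub_trunc_le (hb : 0 ≤ b) (y : ℝ) : |y - trunc b y| ≤ |y| := by
  rcases le_or_gt y b with h₁ | h₁
  · rcases le_or_gt (-b) y with h₂ | h₂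
    · rw [trunc_of_abs_le (abs_le.2 ⟨h₂, h₁⟩), sub_self, abs_zero]
      exact abs_nonneg y
    · rw [trunc, min_eq_right h₁, max_eq_left h₂.le, abs_of_neg (by linarith),
        abs_of_neg (by linarith)]
      linarith
  · rw [trunc, min_eq_left h₁.le, max_eq_right (by linarith), abs_of_pos (by linarith),
      abs_of_pos (by linarith)]
    linarith

theorem continuous_trunc (b : ℝ) : Continuous (trunc b) :=
  continuous_const.max (continuous_const.min continuous_id)

end Truncation

/-- The paper's `‖Z‖²_K = ∫_0^K E[Z(t)²] dt`. -/
def processNormSq {Ω : Type*} [MeasurableSpace Ω] (P : Measure Ω) (K : ℝ) (Z : ℝ → Ω → ℝ) :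
    ℝ≥0∞ :=
  ∫⁻ t in Ioc 0 K, ∫⁻ ω, ENNReal.ofReal (Z t ω ^ 2) ∂P

theorem ofReal_sq_sub_le (a b c : ℝ) :
    ENNReal.ofReal ((a - c) ^ 2) ≤
      2 * ENNReal.ofReal ((a - b) ^ 2) + 2 * ENNReal.ofReal ((b - c) ^ 2) := by
  rw [← ENNReal.ofReal_ofNat 2, ← ENNReal.ofReal_mul zero_le_two,
    ← ENNReal.ofReal_mul zero_le_two, ← ENNReal.ofReal_add (by positivity) (by positivity)]
  exact ENNReal.ofReal_le_ofReal (by nlinarith [sq_nonneg (a - 2 * b + c)])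

section ProcessNorm

variable {Ω : Type*} [MeasurableSpace Ω] {P : Measure Ω} {K : ℝ}

theorem processNormSq_sub_le [SFinite P] {X Y Z : ℝ → Ω → ℝ}
    (hXY : Measurable fun p : ℝ × Ω => X p.1 p.2 - Y p.1 p.2) :
    processNormSq P K (fun t ω => X t ω - Z t ω) ≤
      2 * processNormSq P K (fun t ω => X t ω - Y t ω) +
        2 * processNormSq P K (fun t ω => Y t ω - Z t ω) := by
  have hsq : Measurable fun p : ℝ × Ω => ENNReal.ofReal ((X p.1 p.2 - Y p.1 p.2) ^ 2) :=
    (hXY.pow_const 2).ennreal_ofReal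
  have hsq_left : ∀ t, Measurable fun ω => ENNReal.ofReal ((X t ω - Y t ω) ^ 2) :=
    fun t => hsq.comp measurable_prodMk_left
  unfold processNormSq
  calc _ ≤ ∫⁻ t in Ioc 0 K, (2 * ∫⁻ ω, ENNReal.ofReal ((X t ω - Y t ω) ^ 2) ∂P +
        2 * ∫⁻ ω, ENNReal.ofReal ((Y t ω - Z t ω) ^ 2) ∂P) :=
      lintegral_mono fun t => (lintegral_mono fun ω => ofReal_sq_sub_le _ (Y t ω) _).trans_eq
        (by rw [lintegral_add_left ((hsq_left t).const_mul 2),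
          lintegral_const_mul' _ _ ENNReal.ofNat_ne_top,
          lintegral_const_mul' _ _ ENNReal.ofNat_ne_top])
    _ = _ := by
      rw [lintegral_add_left (hsq.lintegral_prod_right'.const_mul 2),
        lintegral_const_mul' _ _ ENNReal.ofNat_ne_top,
        lintegral_const_mul' _ _ ENNReal.ofNat_ne_top]

theorem tendsto_processNormSq_sub_trunc [SFinite P] {Y : ℝ → Ω → ℝ}
    (hY : Measurable fun p : ℝ × Ω => Y p.1 p.2) (hfin : processNormSq P K Y < ∞) :
    Tendsto (fun b : ℕ => processNormSq P K fun t ω => Y t ω - trunc b (Y t ω)) atTop (𝓝 0) := by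
  have hsq : Measurable fun p : ℝ × Ω => ENNReal.ofReal (Y p.1 p.2 ^ 2) :=
    (hY.pow_const 2).ennreal_ofReal
  have hdom : ∀ (b : ℕ) t ω,
      ENNReal.ofReal ((Y t ω - trunc b (Y t ω)) ^ 2) ≤ ENNReal.ofReal (Y t ω ^ 2) :=
    fun b t ω => ENNReal.ofReal_le_ofReal (sq_le_sq.2 (abs_sub_trunc_le b.cast_nonneg _))
  refine tendsto_lintegral_zero_of_dominated _ hfin.ne
    (fun b => .of_forall fun t => lintegral_mono (hdom b t)) ?_
  filter_upwards [ae_lt_top hsq.lintegral_prod_right' hfin.ne] with t ht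
  refine tendsto_lintegral_zero_of_dominated _ ht.ne (fun b => .of_forall (hdom b t))
    (.of_forall fun ω => tendsto_const_nhds.congr' ?_)
  filter_upwards [tendsto_natCast_atTop_atTop.eventually_ge_atTop |Y t ω|] with b hb
  rw [trunc_of_abs_le hb, sub_self, zero_pow two_ne_zero, ENNReal.ofReal_zero]

theorem tendsto_processNormSq_sub_sampled [IsFiniteMeasure P] {W : ℝ → Ω → ℝ}
    (hW : ∀ᵐ ω ∂P, Continuous (fun t => W t ω) ∧ (∀ c : ℝ, ∃ᶠ s in atTop, c < |W s ω|) ∧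
      ∀ a b, 0 ≤ a → a < b → ∃ s ∈ Ioo a b, W s ω ≠ W a ω)
    {Z : ℝ → Ω → ℝ} {b : ℝ} (hZb : ∀ t ω, |Z t ω| ≤ b)
    (hZleft : ∀ ω t, Tendsto (fun s => Z s ω) (𝓝[<] t) (𝓝 (Z t ω))) :
    Tendsto (fun m => processNormSq P K fun t ω =>
      Z t ω - sampled (fun s => W s ω) (fun s => Z s ω) m t) atTop (𝓝 0) := by
  have hdom : ∀ m, ∀ t ∈ Ioc 0 K, ∀ᵐ ω ∂P, ENNReal.ofReal
      ((Z t ω - sampled (fun s => W s ω) (fun s => Z s ω) m t) ^ 2) ≤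
        ENNReal.ofReal ((b + b) ^ 2) := fun m t ht => hW.mono fun ω ⟨hw, hunb, _⟩ => by
    rw [← sq_abs]
    exact ENNReal.ofReal_le_ofReal (pow_le_pow_left₀ (abs_nonneg _) ((abs_sub _ _).trans
      (add_le_add (hZb t ω) (abs_sampled_le hw hunb (fun s => hZb s ω) m ht.1))) 2)
  unfold processNormSq
  refine tendsto_lintegral_zero_of_dominated (fun _ => ENNReal.ofReal ((b + b) ^ 2) * P univ)
    ?_ (fun m => ?_) ?_
  · rw [setLIntegral_const]
    exact ENNReal.mul_ne_top (ENNReal.mul_ne_top ENNReal.ofReal_ne_top (measure_ne_top _ _))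
      (by simp)
  · filter_upwards [ae_restrict_mem measurableSet_Ioc] with t ht
    exact (lintegral_mono_ae (hdom m t ht)).trans (lintegral_const _).le
  filter_upwards [ae_restrict_mem measurableSet_Ioc] with t ht
  refine tendsto_lintegral_zero_of_dominated _
    (by rw [lintegral_const]; exact ENNReal.mul_ne_top ENNReal.ofReal_ne_top (measure_ne_top _ _))
    (fun m => hdom m t ht) ?_
  filter_upwards [hW] with ω ⟨hw, hunb, hnc⟩
  simpa using ENNReal.tendsto_ofReal
    (((tendsto_sampled hw hunb hnc ht.1 (hZleft ω t)).const_sub (Z t ω)).pow 2)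

end ProcessNorm

theorem approximation_by_sampled_truncations_general {Ω : Type} [MeasurableSpace Ω]
    (P : Measure Ω) [IsProbabilityMeasure P] (W : ℝ → Ω → ℝ) (hW : IsStandardBM P W)
    (K : ℝ) (Y : ℝ → Ω → ℝ)
    (hYadapted : Adapted (Filtration.natural W hW.1) Y)
    (hYleft : LeftContinuousPaths Y)
    (hYnorm : ∫⁻ t in Set.Ioc (0 : ℝ) K,
        ∫⁻ ω, ENNReal.ofReal ((Y t ω) ^ 2) ∂P < ⊤) :
    ∃ msel : ℕ → ℕ, Tendsto msel atTop atTop ∧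
      Tendsto (fun b : ℕ =>
          ∫⁻ t in Set.Ioc (0 : ℝ) K, ∫⁻ ω,
            ENNReal.ofReal ((Y t ω -
              sampled (fun s => W s ω) (fun s => trunc (b : ℝ) (Y s ω)) (msel b) t) ^ 2) ∂P)
        atTop (nhds 0) := by
  have hY : Measurable fun p : ℝ × Ω => Y p.1 p.2 := measurable_uncurry_of_tendsto_nhdsLT
    (fun t => (hYadapted t).mono ((Filtration.natural W hW.1).le t) le_rfl) hYleft
  have hpaths : ∀ᵐ ω ∂P, Continuous (fun t => W t ω) ∧
      (∀ c : ℝ, ∃ᶠ s in atTop, c < |W s ω|) ∧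
      ∀ a b, 0 ≤ a → a < b → ∃ s ∈ Ioo a b, W s ω ≠ W a ω := by
    filter_upwards [hW.ae_frequently_lt_abs, hW.ae_forall_exists_ne] with ω h₁ h₂
    exact ⟨hW.2.2.1 ω, h₁, h₂⟩
  obtain ⟨msel, hmsel, hsampled⟩ := Filter.exists_tendsto_atTop_diagonal fun b : ℕ =>
    tendsto_processNormSq_sub_sampled (K := K) hpaths
      (fun t ω => abs_trunc_le b.cast_nonneg (Y t ω))
      fun ω t => ((continuous_trunc b).tendsto _).comp (hYleft ω t)
  have htrunc := tendsto_processNormSq_sub_trunc hY hYnorm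
  refine ⟨msel, hmsel, tendsto_of_tendsto_of_tendsto_of_le_of_le tendsto_const_nhds ?_
    (fun _ => zero_le) fun b => processNormSq_sub_le (Y := fun t ω => trunc b (Y t ω))
      (hY.sub ((continuous_trunc b).measurable.comp hY))⟩
  simpa using (ENNReal.Tendsto.const_mul htrunc (by simp)).add
    (ENNReal.Tendsto.const_mul hsampled (by simp))

/-- Approximation lemma: for a left-continuous adapted `Y` with
`‖Y‖²_K = ∫_0^K E[Y(t)²] dt < ∞` there is a sequence `m(b) → ∞` with
`‖Y - Y^b_{m(b)}‖_K → 0` as `b → ∞`, where `Y^b_m` samples the truncation `Y^b`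
at the Skorohod stopping times of step `2^{-m}`. -/
theorem approximation_by_sampled_truncations {Ω : Type} [MeasurableSpace Ω]
    (P : Measure Ω) [IsProbabilityMeasure P] (W : ℝ → Ω → ℝ) (hW : IsStandardBM P W)
    (K : ℝ) (hK : 0 < K) (Y : ℝ → Ω → ℝ)
    (hYadapted : Adapted (Filtration.natural W hW.1) Y)
    (hYleft : LeftContinuousPaths Y)
    (hYnorm : ∫⁻ t in Set.Ioc (0 : ℝ) K,
        ∫⁻ ω, ENNReal.ofReal ((Y t ω) ^ 2) ∂P < ⊤) :
    ∃ msel : ℕ → ℕ, Tendsto msel atTop atTop ∧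
      Tendsto (fun b : ℕ =>
          ∫⁻ t in Set.Ioc (0 : ℝ) K, ∫⁻ ω,
            ENNReal.ofReal ((Y t ω -
              sampled (fun s => W s ω) (fun s => trunc (b : ℝ) (Y s ω)) (msel b) t) ^ 2) ∂P)
        atTop (nhds 0) :=
  approximation_by_sampled_truncations_general P W hW K Y hYadapted hYleft hYnorm
end
end

section
/- Let M be a continuous local martingale with M(0) = 0, quadratic variation ⟨M⟩, and define stopping times τ_m(0) = 0, τ_m(k+1) = inf{ t > τ_m(k) : |M(t) − M(τ_m(k))| = 2^{−m} }. Let W be the Dambis–Dubins–Schwarz Brownian motion of M, i.e. M(t) = W(⟨M⟩_t), with Skorohod times s_m(k) for W. Then s_m(k) = ⟨M⟩_{τ_m(k)} and W(s_m(k)) = M(τ_m(k)) for all k with τ_m(k) < ∞. -/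
open scoped Classical ENNReal NNReal
open MeasureTheory ProbabilityTheory Filter Set

noncomputable section

def exitSet (f : ℝ → ℝ) (x ε : ℝ) : Set ℝ :=
  {s | x < s ∧ |f s - f x| = ε}

theorem skTime_succ (f : ℝ → ℝ) (m k : ℕ) :
    skTime f m (k + 1) = sInf (exitSet f (skTime f m k) ((2 : ℝ) ^ (-(m : ℤ)))) :=
  rfl

/-- Since `ε ≠ 0`, `A` strictly increases from `x` to any exit time of `f ∘ A`, so `A` maps these
into exit times of `f`; conversely, the intermediate value theorem pulls an exit time of `f` below
`A (sInf _)` back to an exit time of `f ∘ A` before its infimum. -/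
theorem sInf_exitSet_comp {f A : ℝ → ℝ} (hAc : Continuous A) (hAm : Monotone A) {x ε : ℝ}
    (hε : ε ≠ 0) (hS : (exitSet (f ∘ A) x ε).Nonempty) :
    sInf (exitSet f (A x) ε) = A (sInf (exitSet (f ∘ A) x ε)) := by
  set S := exitSet (f ∘ A) x ε
  have hSbdd : BddBelow S := ⟨x, fun t ht => ht.1.le⟩
  have himage : A '' S ⊆ exitSet f (A x) ε := by
    rintro _ ⟨t, ⟨hxt, ht⟩, rfl⟩
    refine ⟨(hAm hxt.le).lt_of_ne fun hAt => hε ?_, ht⟩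
    rw [← ht, Function.comp_apply, Function.comp_apply, ← hAt, sub_self, abs_zero]
  apply le_antisymm
  · rw [hAm.map_csInf_of_continuousAt hAc.continuousAt hS hSbdd]
    exact csInf_le_csInf ⟨A x, fun s hs => hs.1.le⟩ (hS.image A) himage
  · refine le_csInf ((hS.image A).mono himage) fun s ⟨hxs, hs⟩ => ?_
    by_contra! hlt
    obtain ⟨t, ⟨hxt, htS⟩, rfl⟩ :=
      intermediate_value_Ioo (le_csInf hS fun t ht => ht.1.le) hAc.continuousOn ⟨hxs, hlt⟩
    exact htS.not_ge (csInf_le hSbdd ⟨hxt, hs⟩)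

theorem skTime_comp {f A : ℝ → ℝ} (hAc : Continuous A) (hAm : Monotone A) (hA0 : A 0 = 0)
    (m k : ℕ)
    (H : ∀ j < k, (exitSet (f ∘ A) (skTime (f ∘ A) m j) ((2 : ℝ) ^ (-(m : ℤ)))).Nonempty) :
    skTime f m k = A (skTime (f ∘ A) m k) := by
  induction k with
  | zero => exact hA0.symm
  | succ k ih =>
    rw [skTime_succ, skTime_succ, ih fun j hj => H j (Nat.lt_succ_of_lt hj)]
    exact sInf_exitSet_comp hAc hAm (by positivity) (H k k.lt_succ_self)

theorem dds_skorohod_times_general {Ω : Type} [MeasurableSpace Ω] (P : Measure Ω)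
    (M W : ℝ → Ω → ℝ) (A : ℝ → Ω → ℝ)
    (hA0 : ∀ ω, A 0 ω = 0) (hAcont : ∀ ω, Continuous fun t => A t ω)
    (hAmono : ∀ ω, Monotone fun t => A t ω)
    (hDDS : ∀ t ω, M t ω = W (A t ω) ω) (m : ℕ) :
    ∀ᵐ ω ∂P, ∀ k : ℕ,
      (∀ j < k, {t : ℝ | skTime (fun u => M u ω) m j < t ∧
          |M t ω - M (skTime (fun u => M u ω) m j) ω| = (2 : ℝ) ^ (-(m : ℤ))}.Nonempty) →
      skTime (fun u => W u ω) m k = A (skTime (fun u => M u ω) m k) ω ∧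
      W (skTime (fun u => W u ω) m k) ω = M (skTime (fun u => M u ω) m k) ω := by
  refine Eventually.of_forall fun ω k H => ?_
  have hM : (fun u => M u ω) = (fun u => W u ω) ∘ fun u => A u ω := funext fun t => hDDS t ω
  have hs : skTime (fun u => W u ω) m k = A (skTime (fun u => M u ω) m k) ω := by
    rw [hM]
    exact skTime_comp (hAcont ω) (hAmono ω) (hA0 ω) m k (hM ▸ H)
  exact ⟨hs, by rw [hs, hDDS]⟩

/-- DDS time change identifies the level-crossing times of `M` with the Skorohod
times of its DDS Brownian motion `W`: `s_m(k) = ⟨M⟩_{τ_m(k)}` and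
`W(s_m(k)) = M(τ_m(k))` whenever `τ_m(k)` is finite (all defining sets nonempty).
Here `A = ⟨M⟩` is the quadratic variation and `M(t) = W(A(t))`. -/
theorem dds_skorohod_times {Ω : Type} [MeasurableSpace Ω] (P : Measure Ω)
    [IsProbabilityMeasure P] (M W : ℝ → Ω → ℝ) (A : ℝ → Ω → ℝ)
    (hW : IsStandardBM P W)
    (hA0 : ∀ ω, A 0 ω = 0) (hAcont : ∀ ω, Continuous fun t => A t ω)
    (hAmono : ∀ ω, Monotone fun t => A t ω)
    (hDDS : ∀ t ω, M t ω = W (A t ω) ω) (m : ℕ) :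
    ∀ᵐ ω ∂P, ∀ k : ℕ,
      (∀ j < k, {t : ℝ | skTime (fun u => M u ω) m j < t ∧
          |M t ω - M (skTime (fun u => M u ω) m j) ω| = (2 : ℝ) ^ (-(m : ℤ))}.Nonempty) →
      skTime (fun u => W u ω) m k = A (skTime (fun u => M u ω) m k) ω ∧
      W (skTime (fun u => W u ω) m k) ω = M (skTime (fun u => M u ω) m k) ω :=
  dds_skorohod_times_general P M W A hA0 hAcont hAmono hDDS m
end
end
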